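/- The functions p_{k,n}(t) = 2^{−N} Σ_{j=max{0,n+k−N}}^{min{n,k}} C(k,j) C(N−k,n−j) (1−e^{−2αt})^{n+k−2j} (1+e^{−2αt})^{N−(n+k−2j)} satisfy the forward Kolmogorov equations of the Ehrenfest birth-death process: d/dt p_{k,n}(t) = α(N−n+1) p_{k,n−1}(t) − αN p_{k,n}(t) + α(n+1) p_{k,n+1}(t) for 0 ≤ n ≤ N (with p_{k,−1} = p_{k,N+1} = 0), and p_{k,n}(0) = δ_{k,n}. -/

import Mathlib

/-- Transition probabilities of the Ehrenfest-type birth-death process with rates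
`λ_n = α(N−n)`, `μ_n = αn` and reflecting endpoints. -/
noncomputable def pEhrenfest (alpha : ℝ) (N k n : ℕ) (t : ℝ) : ℝ :=
  (1 / 2 ^ N) * ∑ j ∈ Finset.Icc (n + k - N) (min n k),
    (Nat.choose k j : ℝ) * (Nat.choose (N - k) (n - j) : ℝ) *
      (1 - Real.exp (-2 * alpha * t)) ^ (n + k - 2 * j) *
      (1 + Real.exp (-2 * alpha * t)) ^ (N - (n + k - 2 * j))

/-- The same transition probabilities, extended to `ℤ` by zero
(so that `p_{k,-1} = p_{k,N+1} = 0`). -/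
noncomputable def pEhrenfestZ (alpha : ℝ) (N k : ℕ) (n : ℤ) (t : ℝ) : ℝ :=
  if 0 ≤ n ∧ n ≤ (N : ℤ) then pEhrenfest alpha N k n.toNat t else 0

/-!
The `N` sites of the Ehrenfest model flip independently at rate `α`, so with `x = e^{-2αt}` the
generating function `G(z, t) = ∑ₙ p_{k,n}(t) zⁿ` is
`2^{-N} ((1 + x) z + (1 - x))^k ((1 - x) z + (1 + x))^{N-k}`. Comparing coefficients, the
forward equations are the single equation `∂ₜG = α(1 - z²) ∂_z G - αN(1 - z) G`. Each linear
factor `F` of `G` satisfies `∂ₜF = α(1 - z²) ∂_z F - α(1 - z) F`; since `F ↦ α(1 - z²) ∂_z F` is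
a derivation, equations of this shape are stable under products, the zeroth-order terms adding
up. At `t = 0`, `x = 1` and `G = z^k`.
-/

open Polynomial

namespace Ehrenfest

section CoeffZ

variable {R : Type*}

noncomputable def coeffZ [Semiring R] (n : ℤ) : R[X] →ₗ[R] R :=
  if 0 ≤ n then lcoeff R n.toNat else 0

section Semiring

variable [Semiring R] (p : R[X])

@[simp]
theorem coeffZ_natCast (n : ℕ) : coeffZ n p = p.coeff n := by
  simp [coeffZ]

theorem coeffZ_of_neg {n : ℤ} (hn : n < 0) : coeffZ n p = 0 := by
  simp [coeffZ, hn.not_ge]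

theorem coeffZ_X_mul (n : ℤ) : coeffZ n (X * p) = coeffZ (n - 1) p := by
  rcases lt_trichotomy n 0 with hn | rfl | hn
  · rw [coeffZ_of_neg _ hn, coeffZ_of_neg _ (by omega)]
  · rw [← Nat.cast_zero, coeffZ_natCast, coeff_X_mul_zero, coeffZ_of_neg _ (by omega)]
  · lift n to ℕ using hn.le
    obtain ⟨m, rfl⟩ := Nat.exists_eq_add_one_of_ne_zero (by omega : n ≠ 0)
    rw [coeffZ_natCast, Nat.cast_succ, add_sub_cancel_right, coeffZ_natCast, coeff_X_mul]

theorem coeffZ_eq_zero_of_natDegree_lt {n : ℤ} (hn : (p.natDegree : ℤ) < n) :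
    coeffZ n p = 0 := by
  lift n to ℕ using by omega
  exact (coeffZ_natCast p n).trans (coeff_eq_zero_of_natDegree_lt (by omega))

end Semiring

theorem coeffZ_derivative [Ring R] (p : R[X]) (n : ℤ) :
    coeffZ n (derivative p) = (n + 1) * coeffZ (n + 1) p := by
  rcases lt_or_ge n (-1) with hn | hn
  · rw [coeffZ_of_neg _ (by omega), coeffZ_of_neg _ (by omega), mul_zero]
  obtain rfl | hn := hn.eq_or_lt
  · simp [coeffZ_of_neg]
  lift n to ℕ using by omega
  rw [coeffZ_natCast, coeff_derivative, ← Nat.cast_succ (R := ℤ), coeffZ_natCast]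
  push_cast
  exact_mod_cast (Nat.cast_commute (α := R) (n + 1) _).eq.symm

theorem coeffZ_forward [CommRing R] (p : R[X]) (α : R) (N : ℕ) (n : ℤ) :
    coeffZ n (C α * (1 - X ^ 2) * derivative p - C (α * N) * (1 - X) * p) =
      α * (N - n + 1) * coeffZ (n - 1) p - α * N * coeffZ n p
        + α * (n + 1) * coeffZ (n + 1) p := by
  have h : C α * (1 - X ^ 2) * derivative p - C (α * N) * (1 - X) * p =
      α • derivative p - α • (X * (X * derivative p)) - (α * N) • p + (α * N) • (X * p) := by
    simp only [smul_eq_C_mul]; ring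
  rw [h]
  simp only [map_sub, map_add, map_smul, coeffZ_X_mul, coeffZ_derivative, sub_add_cancel,
    smul_eq_mul]
  push_cast
  ring

end CoeffZ

section HasCoeffDerivAt

variable {𝕜 : Type*} [NontriviallyNormedField 𝕜]

def HasCoeffDerivAt (f : 𝕜 → 𝕜[X]) (f' : 𝕜[X]) (t : 𝕜) : Prop :=
  ∀ n : ℕ, HasDerivAt (fun s => (f s).coeff n) (f'.coeff n) t

variable {f g : 𝕜 → 𝕜[X]} {f' g' : 𝕜[X]} {t : 𝕜}

theorem HasCoeffDerivAt.hasDerivAt_coeffZ (hf : HasCoeffDerivAt f f' t) (n : ℤ) :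
    HasDerivAt (fun s => coeffZ n (f s)) (coeffZ n f') t := by
  rcases lt_or_ge n 0 with hn | hn
  · simpa only [coeffZ_of_neg _ hn] using hasDerivAt_const t (0 : 𝕜)
  · lift n to ℕ using hn
    simpa only [coeffZ_natCast] using hf n

theorem hasCoeffDerivAt_const (p : 𝕜[X]) : HasCoeffDerivAt (fun _ => p) 0 t :=
  fun n => by simpa using hasDerivAt_const t (p.coeff n)

theorem hasCoeffDerivAt_C_mul {a : 𝕜 → 𝕜} {a' : 𝕜} (ha : HasDerivAt a a' t) (p : 𝕜[X]) :
    HasCoeffDerivAt (fun s => C (a s) * p) (C a' * p) t :=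
  fun n => by simpa only [coeff_C_mul] using ha.mul_const (p.coeff n)

theorem HasCoeffDerivAt.add (hf : HasCoeffDerivAt f f' t) (hg : HasCoeffDerivAt g g' t) :
    HasCoeffDerivAt (fun s => f s + g s) (f' + g') t :=
  fun n => by simpa only [coeff_add] using (hf n).fun_add (hg n)

theorem HasCoeffDerivAt.mul (hf : HasCoeffDerivAt f f' t) (hg : HasCoeffDerivAt g g' t) :
    HasCoeffDerivAt (fun s => f s * g s) (f' * g t + f t * g') t := by
  intro n
  simp only [coeff_mul, coeff_add, ← Finset.sum_add_distrib]
  exact HasDerivAt.fun_sum fun x _ => (hf x.1).mul (hg x.2)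

theorem HasCoeffDerivAt.mul_of_transport {V c d : 𝕜[X]}
    (hf : HasCoeffDerivAt f (V * derivative (f t) + c * f t) t)
    (hg : HasCoeffDerivAt g (V * derivative (g t) + d * g t) t) :
    HasCoeffDerivAt (fun s => f s * g s)
      (V * derivative (f t * g t) + (c + d) * (f t * g t)) t := by
  convert hf.mul hg using 1
  rw [derivative_mul]
  ring

theorem HasCoeffDerivAt.pow_of_transport {V c : 𝕜[X]}
    (hf : HasCoeffDerivAt f (V * derivative (f t) + c * f t) t) (m : ℕ) :
    HasCoeffDerivAt (fun s => f s ^ m) (V * derivative (f t ^ m) + (m • c) * f t ^ m) t := by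
  induction m with
  | zero => simpa using hasCoeffDerivAt_const (t := t) (1 : 𝕜[X])
  | succ m ih =>
    simp only [pow_succ, succ_nsmul]
    exact ih.mul_of_transport hf

end HasCoeffDerivAt

theorem coeff_C_mul_X_add_C_pow {R : Type*} [CommSemiring R] (a b : R) (k j : ℕ) :
    ((C a * X + C b) ^ k).coeff j = k.choose j * a ^ j * b ^ (k - j) := by
  have h : (C a * X + C b) ^ k = ((X + C b) ^ k).comp (C a * X) := by
    simp [pow_comp]
  rw [h, comp_C_mul_X_coeff, coeff_X_add_C_pow]
  ring

section Generating

open Real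

noncomputable def ehrenfestGF (k l : ℕ) (x : ℝ) : ℝ[X] :=
  (C (1 + x) * X + C (1 - x)) ^ k * (C (1 - x) * X + C (1 + x)) ^ l

theorem natDegree_ehrenfestGF_le (k l : ℕ) (x : ℝ) : (ehrenfestGF k l x).natDegree ≤ k + l := by
  have h := natDegree_mul_le_of_le (natDegree_pow_le_of_le k (natDegree_linear_le (a := 1 + x)
    (b := 1 - x))) (natDegree_pow_le_of_le l (natDegree_linear_le (a := 1 - x) (b := 1 + x)))
  rwa [mul_one, mul_one] at h

theorem ehrenfestGF_one (k l : ℕ) : ehrenfestGF k l 1 = C (2 ^ (k + l)) * X ^ k := by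
  simp only [ehrenfestGF, sub_self, map_zero, add_zero, zero_mul, zero_add, one_add_one_eq_two]
  rw [mul_pow, pow_add, C_mul, C_pow, C_pow]
  ring

theorem pEhrenfest_eq_coeff {N k : ℕ} (hk : k ≤ N) (α : ℝ) (n : ℕ) (t : ℝ) :
    pEhrenfest α N k n t = 1 / 2 ^ N * (ehrenfestGF k (N - k) (exp (-2 * α * t))).coeff n := by
  rw [pEhrenfest, ehrenfestGF, coeff_mul, Finset.Nat.sum_antidiagonal_eq_sum_range_succ_mk]
  simp only [coeff_C_mul_X_add_C_pow]
  congr 1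
  have hsub : Finset.Icc (n + k - N) (min n k) ⊆ Finset.range (n + 1) := by
    intro j hj
    simp only [Finset.mem_Icc, Finset.mem_range] at hj ⊢
    omega
  rw [← Finset.sum_subset hsub]
  · refine Finset.sum_congr rfl fun j hj => ?_
    simp only [Finset.mem_Icc, le_min_iff] at hj
    rw [show N - (n + k - 2 * j) = j + (N - k - (n - j)) by omega,
      show n + k - 2 * j = (k - j) + (n - j) by omega]
    ring
  · intro j hj hj'
    simp only [Finset.mem_Icc, Finset.mem_range, le_min_iff, not_and_or, not_le] at hj hj'
    rcases hj' with h | h | h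
    · rw [Nat.choose_eq_zero_of_lt (n := N - k) (by omega)]; simp
    · omega
    · rw [Nat.choose_eq_zero_of_lt h]; simp

theorem pEhrenfestZ_eq_coeffZ {N k : ℕ} (hk : k ≤ N) (α : ℝ) (n : ℤ) (t : ℝ) :
    pEhrenfestZ α N k n t = 1 / 2 ^ N * coeffZ n (ehrenfestGF k (N - k) (exp (-2 * α * t))) := by
  rw [pEhrenfestZ]
  split_ifs with hn
  · lift n to ℕ using hn.1
    rw [Int.toNat_natCast, coeffZ_natCast, pEhrenfest_eq_coeff hk]
  · rcases lt_or_ge n 0 with hn' | hn'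
    · rw [coeffZ_of_neg _ hn', mul_zero]
    · have hdeg := natDegree_ehrenfestGF_le k (N - k) (exp (-2 * α * t))
      rw [coeffZ_eq_zero_of_natDegree_lt _ (by omega), mul_zero]

theorem hasCoeffDerivAt_linear_factor {α : ℝ} {y : ℝ → ℝ} {t : ℝ}
    (hy : HasDerivAt y (-2 * α * y t) t) :
    HasCoeffDerivAt (fun s => C (1 + y s) * X + C (1 - y s))
      (C α * (1 - X ^ 2) * derivative (C (1 + y t) * X + C (1 - y t))
        + C (-α) * (1 - X) * (C (1 + y t) * X + C (1 - y t))) t := by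
  have h := (hasCoeffDerivAt_C_mul (hy.const_add 1) X).add
    (hasCoeffDerivAt_C_mul (hy.const_sub 1) 1)
  simp only [mul_one] at h
  convert h using 1
  rw [derivative_add, derivative_C_mul_X, derivative_C, add_zero]
  simp only [C_add, C_sub, C_mul, C_neg, C_1, map_ofNat]
  ring

theorem hasCoeffDerivAt_ehrenfestGF (α : ℝ) (k l : ℕ) (t : ℝ) :
    HasCoeffDerivAt (fun s => ehrenfestGF k l (exp (-2 * α * s)))
      (C α * (1 - X ^ 2) * derivative (ehrenfestGF k l (exp (-2 * α * t)))
        - C (α * (k + l : ℕ)) * (1 - X) * ehrenfestGF k l (exp (-2 * α * t))) t := by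
  have hx : HasDerivAt (fun s => exp (-2 * α * s)) (-2 * α * exp (-2 * α * t)) t := by
    simpa [mul_comm] using ((hasDerivAt_id t).const_mul (-2 * α)).exp
  have hA := (hasCoeffDerivAt_linear_factor hx).pow_of_transport k
  have hB := (hasCoeffDerivAt_linear_factor (hx.fun_neg.congr_deriv (by ring))).pow_of_transport l
  simp only [sub_neg_eq_add, ← sub_eq_add_neg] at hB
  unfold ehrenfestGF
  convert hA.mul_of_transport hB using 1
  simp only [nsmul_eq_mul, Nat.cast_add, map_neg, C_mul, C_add, map_natCast]
  ring

end Generating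

end Ehrenfest

open Ehrenfest in
theorem pEhrenfest_solves_forward_equations_general
    (alpha : ℝ) (N : ℕ) (k : ℕ) (hk : k ≤ N) :
    (∀ n : ℤ, 0 ≤ n → n ≤ (N : ℤ) → ∀ t : ℝ,
      HasDerivAt (fun u => pEhrenfestZ alpha N k n u)
        (alpha * ((N : ℝ) - (n : ℝ) + 1) * pEhrenfestZ alpha N k (n - 1) t
          - alpha * (N : ℝ) * pEhrenfestZ alpha N k n t
          + alpha * ((n : ℝ) + 1) * pEhrenfestZ alpha N k (n + 1) t) t) ∧
    (∀ n : ℕ, n ≤ N → pEhrenfest alpha N k n 0 = if k = n then 1 else 0) := by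
  constructor
  · intro n _ _ t
    have h := ((hasCoeffDerivAt_ehrenfestGF alpha k (N - k) t).hasDerivAt_coeffZ n).const_mul
      (1 / 2 ^ N : ℝ)
    rw [Nat.add_sub_cancel' hk, coeffZ_forward] at h
    simp only [pEhrenfestZ_eq_coeffZ hk]
    exact h.congr_deriv (by ring)
  · intro n _
    rw [pEhrenfest_eq_coeff hk, mul_zero, Real.exp_zero, ehrenfestGF_one, Nat.add_sub_cancel' hk,
      coeff_C_mul_X_pow]
    simp only [eq_comm (a := n)]
    split_ifs <;> simp

theorem pEhrenfest_solves_forward_equations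
    (alpha : ℝ) (halpha : 0 < alpha) (N : ℕ) (hN : 1 ≤ N) (k : ℕ) (hk : k ≤ N) :
    (∀ n : ℤ, 0 ≤ n → n ≤ (N : ℤ) → ∀ t : ℝ,
      HasDerivAt (fun u => pEhrenfestZ alpha N k n u)
        (alpha * ((N : ℝ) - (n : ℝ) + 1) * pEhrenfestZ alpha N k (n - 1) t
          - alpha * (N : ℝ) * pEhrenfestZ alpha N k n t
          + alpha * ((n : ℝ) + 1) * pEhrenfestZ alpha N k (n + 1) t) t) ∧
    (∀ n : ℕ, n ≤ N → pEhrenfest alpha N k n 0 = if k = n then 1 else 0) :=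
  pEhrenfest_solves_forward_equations_general alpha N k hk
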